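/- Define f : ℝ² ∖ {(0,0)} → ℝ³ by f(x,y) = (−y − y/(x²+y²), x, (1/2)·log(x²+y²)); in polar coordinates z = r e^{it} this is f = (−sin t·(1/r + r), r cos t, log r). Then: (1) f is injective; (2) f is an immersion, i.e. its (Fréchet) derivative is injective at every point; (3) f is proper, i.e. the preimage of every compact subset of ℝ³ is compact (the third coordinate blows up as z → 0 and as |z| → ∞). -/

import Mathlib

/-!
The map has the smooth global left inverse `(a, b, c) ↦ (b, -a / (1 + e^{-2c}))`: the second
coordinate recovers `x`, the third recovers `x² + y²`, and then the first is `-y` times the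
positive factor `1 + 1/(x² + y²)`. A left inverse gives injectivity at once, and by the chain rule
it gives injectivity of the derivative. For properness, the preimage of a compact `K` lies in the
compact image of `K` under the left inverse, and it is closed because the third coordinate tends
to `-∞` at the puncture.
-/

open Filter Function Topology Set

section

variable {𝕜 E F : Type*} [NontriviallyNormedField 𝕜] [NormedAddCommGroup E] [NormedSpace 𝕜 E]
  [NormedAddCommGroup F] [NormedSpace 𝕜 F]

theorem injective_fderiv_of_eventually_leftInverse {f : E → F} {g : F → E} {x : E}
    (hf : DifferentiableAt 𝕜 f x) (hg : DifferentiableAt 𝕜 g (f x)) (hgf : g ∘ f =ᶠ[𝓝 x] id) :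
    Injective (fderiv 𝕜 f x) := by
  have hcomp : (fderiv 𝕜 g (f x)).comp (fderiv 𝕜 f x) = ContinuousLinearMap.id 𝕜 E := by
    rw [← fderiv_comp x hg hf, hgf.fderiv_eq, fderiv_id]
  exact LeftInverse.injective fun v => congrArg (· v) hcomp

end

section

variable {X Y : Type*} [TopologicalSpace X] [T1Space X] [TopologicalSpace Y] [T2Space Y]
  {f : X → Y} {x₀ : X} {K : Set Y}

theorem isClosed_setOf_ne_and_mem (hf : ContinuousOn f {x₀}ᶜ)
    (hf₀ : Tendsto f (𝓝[≠] x₀) (cocompact Y)) (hK : IsCompact K) :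
    IsClosed {x | x ≠ x₀ ∧ f x ∈ K} := by
  refine isOpen_compl_iff.1 (isOpen_iff_mem_nhds.2 fun x hx => ?_)
  have hoff : ∀ᶠ y in 𝓝 x, y ≠ x₀ → f y ∉ K := by
    rcases eq_or_ne x x₀ with rfl | hx₀
    · exact eventually_nhdsWithin_iff.1 (hf₀ hK.compl_mem_cocompact)
    · have hfx : f x ∈ Kᶜ := fun hxK => hx ⟨hx₀, hxK⟩
      exact ((hf.continuousAt (isOpen_compl_singleton.mem_nhds hx₀)).eventually
        (hK.isClosed.isOpen_compl.mem_nhds hfx)).mono fun _ h _ => h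
  filter_upwards [hoff] with y hy ⟨hy₀, hyK⟩ using hy hy₀ hyK

theorem isCompact_setOf_ne_and_mem {g : Y → X} (hf : ContinuousOn f {x₀}ᶜ)
    (hf₀ : Tendsto f (𝓝[≠] x₀) (cocompact Y)) (hg : Continuous g) (hgf : LeftInvOn g f {x₀}ᶜ)
    (hK : IsCompact K) : IsCompact {x | x ≠ x₀ ∧ f x ∈ K} :=
  (hK.image hg).of_isClosed_subset (isClosed_setOf_ne_and_mem hf hf₀ hK)
    fun x ⟨hx, hxK⟩ => ⟨f x, hxK, hgf hx⟩

end

noncomputable section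

def sphereMap (p : ℝ × ℝ) : ℝ × ℝ × ℝ :=
  (-p.2 - p.2 / (p.1 ^ 2 + p.2 ^ 2), p.1, (1 / 2) * Real.log (p.1 ^ 2 + p.2 ^ 2))

def sphereMapLeftInv (q : ℝ × ℝ × ℝ) : ℝ × ℝ :=
  (q.2.1, -q.1 / (1 + Real.exp (-2 * q.2.2)))

end

theorem fst_sq_add_snd_sq_pos {p : ℝ × ℝ} (hp : p ≠ (0, 0)) : 0 < p.1 ^ 2 + p.2 ^ 2 := by
  obtain ⟨x, y⟩ := p
  rw [Ne, Prod.mk.injEq, not_and_or] at hp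
  rcases hp with h | h <;> positivity

theorem leftInvOn_sphereMapLeftInv :
    LeftInvOn sphereMapLeftInv sphereMap {(0, 0)}ᶜ := by
  intro p hp
  have hs := fst_sq_add_snd_sq_pos hp
  have hexp : Real.exp (-2 * ((1 / 2) * Real.log (p.1 ^ 2 + p.2 ^ 2))) =
      (p.1 ^ 2 + p.2 ^ 2)⁻¹ := by
    rw [← mul_assoc, show (-2 : ℝ) * (1 / 2) = -1 by norm_num, neg_one_mul, Real.exp_neg,
      Real.exp_log hs]
  ext
  · rfl
  · simp only [sphereMapLeftInv, sphereMap, hexp]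
    field_simp
    ring

theorem differentiableAt_sphereMap {p : ℝ × ℝ} (hp : p ≠ (0, 0)) :
    DifferentiableAt ℝ sphereMap p := by
  have hs := (fst_sq_add_snd_sq_pos hp).ne'
  unfold sphereMap
  fun_prop (disch := exact hs)

theorem differentiable_sphereMapLeftInv : Differentiable ℝ sphereMapLeftInv := by
  unfold sphereMapLeftInv
  fun_prop (disch := intro; positivity)

theorem tendsto_sphereMap_cocompact :
    Tendsto sphereMap (𝓝[≠] (0, 0)) (cocompact (ℝ × ℝ × ℝ)) := by
  have hs : Tendsto (fun p : ℝ × ℝ => p.1 ^ 2 + p.2 ^ 2) (𝓝[≠] (0, 0)) (𝓝[>] 0) := by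
    refine tendsto_nhdsWithin_iff.2 ⟨?_, eventually_nhdsWithin_of_forall fun p hp => ?_⟩
    · exact tendsto_nhdsWithin_of_tendsto_nhds (by simpa using (by fun_prop :
        Continuous fun p : ℝ × ℝ => p.1 ^ 2 + p.2 ^ 2).tendsto (0, 0))
    · exact fst_sq_add_snd_sq_pos hp
  have hlog : Tendsto (fun p => (sphereMap p).2.2) (𝓝[≠] (0, 0)) atBot :=
    (Real.tendsto_log_nhdsGT_zero.comp hs).const_mul_atBot (by norm_num)
  exact (hlog.mono_right atBot_le_cocompact).of_tendsto_comp (g := fun q : ℝ × ℝ × ℝ => q.2.2)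
    (comap_cocompact_le continuous_snd.snd)

/-- The properly embedded sphere with one end of type `(0,1,2)` and one end of
type `(1,2,2)`, total curvature `-4π`:
`f(x,y) = (-y - y/(x²+y²), x, log(x²+y²)/2)` on `ℝ² ∖ {(0,0)}`. -/
theorem stmt_12 (f : ℝ × ℝ → ℝ × ℝ × ℝ)
    (hf : ∀ x y : ℝ, f (x, y) =
      (-y - y / (x ^ 2 + y ^ 2), x, (1 / 2) * Real.log (x ^ 2 + y ^ 2))) :
    Set.InjOn f {p : ℝ × ℝ | p ≠ (0, 0)} ∧
    (∀ p : ℝ × ℝ, p ≠ (0, 0) → Function.Injective (fderiv ℝ f p)) ∧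
    (∀ K : Set (ℝ × ℝ × ℝ), IsCompact K →
      IsCompact {p : ℝ × ℝ | p ≠ (0, 0) ∧ f p ∈ K}) := by
  obtain rfl : f = sphereMap := funext fun ⟨x, y⟩ => hf x y
  have hleft := leftInvOn_sphereMapLeftInv
  refine ⟨hleft.injOn, fun p hp => ?_, fun K hK => ?_⟩
  · refine injective_fderiv_of_eventually_leftInverse (differentiableAt_sphereMap hp)
      (differentiable_sphereMapLeftInv _) ?_
    filter_upwards [isOpen_compl_singleton.mem_nhds hp] with q hq using hleft hq
  · exact isCompact_setOf_ne_and_mem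
      (fun p hp => (differentiableAt_sphereMap hp).continuousAt.continuousWithinAt)
      tendsto_sphereMap_cocompact differentiable_sphereMapLeftInv.continuous hleft hK
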